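/- Let H be a hypergraph with an Euler family F and incidence graph G, let G_F be the subgraph of G corresponding to F, and let C be an F-interchanging cycle of G. If the edges of C that belong to G_F lie in pairwise distinct connected components of G_F, then C is an F-diminishing cycle. -/

import Mathlib

open scoped Classical

/-- A hypergraph: a finite nonempty vertex type `V`, a finite index type `E` of
edges (so that repeated edges are allowed, as in a multiset of edges), and a map
`mem` assigning to each edge the finite set of its vertices. -/
structure HGraphE where
  V : Type
  E : Type
  [fintypeV : Fintype V]
  [fintypeE : Fintype E]
  [nonemptyV : Nonempty V]
  mem : E → Finset V

attribute [instance] HGraphE.fintypeV HGraphE.fintypeE HGraphE.nonemptyV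

namespace HGraphE

/-- A walk `v₀ e₁ v₁ e₂ … e_k v_k` in a hypergraph: consecutive anchors are
distinct and both lie in the connecting edge. -/
structure Walk (H : HGraphE) where
  k : ℕ
  vtx : Fin (k + 1) → H.V
  edge : Fin k → H.E
  mem_left : ∀ i : Fin k, vtx i.castSucc ∈ H.mem (edge i)
  mem_right : ∀ i : Fin k, vtx i.succ ∈ H.mem (edge i)
  ne : ∀ i : Fin k, vtx i.castSucc ≠ vtx i.succ

/-- A trail is a walk with pairwise distinct edges. -/
def Walk.IsTrail {H : HGraphE} (W : H.Walk) : Prop :=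
  Function.Injective W.edge

/-- A closed walk: `v₀ = v_k` and `k ≥ 2`. -/
def Walk.IsClosed {H : HGraphE} (W : H.Walk) : Prop :=
  W.vtx 0 = W.vtx (Fin.last W.k) ∧ 2 ≤ W.k

def Walk.IsClosedTrail {H : HGraphE} (W : H.Walk) : Prop :=
  W.IsTrail ∧ W.IsClosed

/-- The anchors of a walk. -/
def Walk.anchors {H : HGraphE} (W : H.Walk) : Set H.V := Set.range W.vtx

/-- The set of edges traversed by a walk. -/
def Walk.edgeSet {H : HGraphE} (W : H.Walk) : Set H.E := Set.range W.edge

/-- An Euler tour: a closed trail traversing every edge exactly once. -/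
def IsEulerTour (H : HGraphE) (W : H.Walk) : Prop :=
  W.IsClosedTrail ∧ Function.Bijective W.edge

def HasEulerTour (H : HGraphE) : Prop := ∃ W : H.Walk, H.IsEulerTour W

/-- A hypergraph is eulerian if it has no edges or admits an Euler tour. -/
def IsEulerian (H : HGraphE) : Prop := IsEmpty H.E ∨ H.HasEulerTour

/-- An Euler family: a set of pairwise anchor-disjoint, edge-disjoint closed
trails jointly traversing every edge exactly once. -/
def IsEulerFamily (H : HGraphE) (F : Set H.Walk) : Prop :=
  (∀ W ∈ F, W.IsClosedTrail) ∧
  (∀ W ∈ F, ∀ W' ∈ F, W ≠ W' →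
    Disjoint W.anchors W'.anchors ∧ Disjoint W.edgeSet W'.edgeSet) ∧
  (∀ e : H.E, ∃ W ∈ F, e ∈ W.edgeSet)

/-- A hypergraph is quasi-eulerian if it has no edges or admits an Euler family. -/
def IsQuasiEulerian (H : HGraphE) : Prop :=
  IsEmpty H.E ∨ ∃ F : Set H.Walk, H.IsEulerFamily F

/-- A minimum Euler family: one with the fewest components. -/
def IsMinEulerFamily (H : HGraphE) (F : Set H.Walk) : Prop :=
  H.IsEulerFamily F ∧ ∀ F' : Set H.Walk, H.IsEulerFamily F' → F.ncard ≤ F'.ncard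

/-- `H` is `k`-uniform if each edge has exactly `k` vertices. -/
def IsUniform (H : HGraphE) (k : ℕ) : Prop := ∀ e : H.E, (H.mem e).card = k

/-- A covering `k`-hypergraph (`k ≥ 3`): a nonempty `k`-uniform hypergraph in
which every `(k-1)`-subset of the vertex set lies in at least one edge. -/
def IsCovering (H : HGraphE) (k : ℕ) : Prop :=
  3 ≤ k ∧ Nonempty H.E ∧ H.IsUniform k ∧
    ∀ S : Finset H.V, S.card = k - 1 → ∃ e : H.E, S ⊆ H.mem e

/-- The incidence graph of a hypergraph: the bipartite simple graph on
`V ⊕ E` joining `v` and `e` exactly when `v ∈ e`. -/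
def incidenceGraph (H : HGraphE) : SimpleGraph (H.V ⊕ H.E) where
  Adj x y :=
    (∃ v e, x = Sum.inl v ∧ y = Sum.inr e ∧ v ∈ H.mem e) ∨
    (∃ v e, x = Sum.inr e ∧ y = Sum.inl v ∧ v ∈ H.mem e)
  symm := by
    constructor
    rintro x y (⟨v, e, rfl, rfl, h⟩ | ⟨v, e, rfl, rfl, h⟩)
    · exact Or.inr ⟨v, e, rfl, rfl, h⟩
    · exact Or.inl ⟨v, e, rfl, rfl, h⟩
  loopless := by
    constructor
    rintro x (⟨v, e, rfl, h, -⟩ | ⟨v, e, rfl, h, -⟩) <;> exact absurd h (by simp)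

/-- `v` and `e` appear consecutively in some trail of the family `F`. -/
def ConsecIn (H : HGraphE) (F : Set H.Walk) (v : H.V) (e : H.E) : Prop :=
  ∃ W ∈ F, ∃ i : Fin W.k, W.edge i = e ∧ (W.vtx i.castSucc = v ∨ W.vtx i.succ = v)

/-- The spanning subgraph of the incidence graph corresponding to an Euler
family `F`: its edges are the incident pairs `ve` consecutive in some trail of `F`. -/
def eulerSubgraph (H : HGraphE) (F : Set H.Walk) : SimpleGraph (H.V ⊕ H.E) where
  Adj x y :=
    (∃ v e, x = Sum.inl v ∧ y = Sum.inr e ∧ H.ConsecIn F v e) ∨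
    (∃ v e, x = Sum.inr e ∧ y = Sum.inl v ∧ H.ConsecIn F v e)
  symm := by
    constructor
    rintro x y (⟨v, e, rfl, rfl, h⟩ | ⟨v, e, rfl, rfl, h⟩)
    · exact Or.inr ⟨v, e, rfl, rfl, h⟩
    · exact Or.inl ⟨v, e, rfl, rfl, h⟩
  loopless := by
    constructor
    rintro x (⟨v, e, rfl, h, -⟩ | ⟨v, e, rfl, h, -⟩) <;> exact absurd h (by simp)

end HGraphE

/-- The degree of a vertex of a simple graph (number of neighbours). -/
noncomputable def sdeg {α : Type*} (G : SimpleGraph α) (x : α) : ℕ :=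
  (G.neighborSet x).ncard

/-- A connected component of a simple graph is nontrivial if it contains an edge. -/
def NontrivComp {α : Type*} (G : SimpleGraph α) (c : G.ConnectedComponent) : Prop :=
  ∃ x y, G.Adj x y ∧ G.connectedComponentMk x = c

/-- The number of nontrivial connected components of a simple graph. -/
noncomputable def ntComps {α : Type*} (G : SimpleGraph α) : ℕ :=
  {c : G.ConnectedComponent | NontrivComp G c}.ncard

/-- A cut vertex of a simple graph: a vertex whose deletion increases the number
of connected components, i.e. some two vertices distinct from it are joined by a
walk but by no walk avoiding it. -/
def IsCutVtx {α : Type*} (G : SimpleGraph α) (v : α) : Prop :=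
  ∃ x y, x ≠ v ∧ y ≠ v ∧ G.Reachable x y ∧ ¬ ∃ p : G.Walk x y, v ∉ p.support

/-- An `F`-interchanging cycle: a cycle of the incidence graph such that every
e-vertex on it is incident in `G_F` with exactly one edge of the cycle. -/
def IsInterchanging (H : HGraphE) (F : Set H.Walk) {x : H.V ⊕ H.E}
    (C : (H.incidenceGraph).Walk x x) : Prop :=
  C.IsCycle ∧ ∀ e : H.E, (Sum.inr e : H.V ⊕ H.E) ∈ C.support →
    ∃! s : Sym2 (H.V ⊕ H.E),
      s ∈ C.edges ∧ (Sum.inr e : H.V ⊕ H.E) ∈ s ∧ s ∈ (H.eulerSubgraph F).edgeSet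

/-- The symmetric difference of a simple graph with a set of potential edges. -/
def symmDiffEdges {α : Type*} (G : SimpleGraph α) (s : Set (Sym2 α)) : SimpleGraph α :=
  SimpleGraph.fromEdgeSet (symmDiff G.edgeSet s)

/-- An `F`-diminishing cycle: an `F`-interchanging cycle `C` such that
`G_F Δ C` has fewer nontrivial connected components than `G_F`. -/
def IsDiminishing (H : HGraphE) (F : Set H.Walk) {x : H.V ⊕ H.E}
    (C : (H.incidenceGraph).Walk x x) : Prop :=
  IsInterchanging H F C ∧
    ntComps (symmDiffEdges (H.eulerSubgraph F) {s | s ∈ C.edges}) <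
      ntComps (H.eulerSubgraph F)

/-!
Write `G'` for `G_F Δ C`. An edge of `C` that lies in `G_F` lies on a closed trail of `F`; going
round that trail the other way uses only edges of `G_F` in the same component, which by hypothesis
are not on `C`, so the ends of every edge of `C` stay connected in `G'`. Hence the vertices of `C`
lie in a single component of `G'`, and since `G_F` and `G'` agree away from `C`, every other
nontrivial component of `G'` is a nontrivial component of `G_F` that `C` does not meet. But `C`
passes through two distinct e-vertices, and their `G_F`-edges on `C` lie in two distinct
nontrivial components of `G_F`, both met by `C`.
-/

open Sum SimpleGraph

namespace SimpleGraph

variable {α : Type*} {G G' : SimpleGraph α}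

theorem reachable_of_forall_adj_succ {f : ℕ → α} {a b : ℕ} (hab : a ≤ b)
    (h : ∀ t, a ≤ t → t < b → G.Adj (f t) (f (t + 1))) : G.Reachable (f a) (f b) := by
  induction b, hab using Nat.le_induction with
  | base => rfl
  | succ b hab ih =>
    exact (ih fun t h₁ h₂ => h t h₁ (by omega)).trans (h b hab (by omega)).reachable

/-- Going the other way round a periodic sequence, one can avoid the step at `r`. -/
theorem reachable_of_periodic {f : ℕ → α} {n r : ℕ} (hf : Function.Periodic f n) (hn : 0 < n)
    (h : ∀ t, ¬ t ≡ r [MOD n] → G.Adj (f t) (f (t + 1))) :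
    G.Reachable (f (r + 1)) (f r) := by
  rw [← hf r]
  refine reachable_of_forall_adj_succ (by omega) fun t h₁ h₂ => h t fun hmod => ?_
  have hdvd : n ∣ t - r := (Nat.modEq_iff_dvd' (by omega)).mp hmod.symm
  have := Nat.le_of_dvd (by omega) hdvd
  omega

theorem Walk.reachable_of_mem_support {u v y : α} (p : G.Walk u v)
    (h : ∀ a b, s(a, b) ∈ p.edges → G'.Reachable a b) (hy : y ∈ p.support) :
    G'.Reachable u y := by
  induction p with
  | nil => rw [Walk.support_nil, List.mem_singleton] at hy; rw [hy]
  | @cons u w v huw p ih =>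
    rw [Walk.support_cons, List.mem_cons] at hy
    rcases hy with rfl | hy
    · rfl
    · simp only [Walk.edges_cons, List.mem_cons] at h
      exact (h u w (Or.inl rfl)).trans (ih (fun a b hab => h a b (Or.inr hab)) hy)

theorem reachable_of_adj_of_invariant (P : α → Prop)
    (hP : ∀ a b, P a → G.Adj a b → P b ∧ G'.Adj a b) {a b : α} (ha : P a)
    (hab : G.Reachable a b) : G'.Reachable a b := by
  obtain ⟨p⟩ := hab
  induction p with
  | nil => rfl
  | cons h p ih => exact (hP _ _ ha h).2.reachable.trans (ih (hP _ _ ha h).1)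

theorem nontrivComp_of_mem_edgeSet {s : Sym2 α} (hs : s ∈ G.edgeSet) {a : α} (ha : a ∈ s) :
    NontrivComp G (G.connectedComponentMk a) := by
  induction s using Sym2.ind with
  | _ p q =>
    rcases Sym2.mem_iff.mp ha with rfl | rfl
    · exact ⟨a, q, hs, rfl⟩
    · exact ⟨a, p, G.adj_symm hs, rfl⟩

section AgreeOff

variable {S : Set α} {x : α}

theorem reachable_iff_of_agree_off (hagree : ∀ a ∉ S, ∀ b, G'.Adj a b ↔ G.Adj a b)
    (hS : ∀ a ∈ S, G'.Reachable x a) {a b : α} (ha : ¬ G'.Reachable x a) :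
    G.Reachable a b ↔ G'.Reachable a b := by
  have notMem : ∀ c, ¬ G'.Reachable x c → c ∉ S := fun c hc hcS => hc (hS c hcS)
  refine ⟨reachable_of_adj_of_invariant (¬ G'.Reachable x ·) (fun c d hc hcd => ?_) ha,
    reachable_of_adj_of_invariant (¬ G'.Reachable x ·) (fun c d hc hcd => ?_) ha⟩
  · have hcd' := (hagree c (notMem c hc) d).mpr hcd
    exact ⟨fun hd => hc (hd.trans hcd'.symm.reachable), hcd'⟩
  · exact ⟨fun hd => hc (hd.trans hcd.symm.reachable), (hagree c (notMem c hc) d).mp hcd⟩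

theorem ntComps_le_of_agree_off [Finite α] (hagree : ∀ a ∉ S, ∀ b, G'.Adj a b ↔ G.Adj a b)
    (hS : ∀ a ∈ S, G'.Reachable x a) :
    ntComps G' ≤
      {c | NontrivComp G c ∧ ∀ a ∈ S, G.connectedComponentMk a ≠ c}.ncard + 1 := by
  have hrep (c : G'.ConnectedComponent) : G'.connectedComponentMk c.out = c := Quot.out_eq c
  have hfar : ∀ c ∈ {c | NontrivComp G' c} \ {G'.connectedComponentMk x},
      ¬ G'.Reachable x c.out := fun c hc hx =>
    hc.2 ((hrep c).symm.trans (ConnectedComponent.eq.mpr hx.symm))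
  refine (Set.ncard_le_ncard_sdiff_add_ncard _ {G'.connectedComponentMk x}).trans ?_
  rw [Set.ncard_singleton]
  refine Nat.add_le_add_right
    (Set.ncard_le_ncard_of_injOn (fun c => G.connectedComponentMk c.out) ?_ ?_ (Set.toFinite _)) 1
  · intro c hc
    obtain ⟨p, q, hpq, hp⟩ := hc.1
    have hcp : G'.Reachable c.out p := ConnectedComponent.eq.mp ((hrep c).trans hp.symm)
    have hxp : ¬ G'.Reachable x p := fun h => hfar c hc (h.trans hcp.symm)
    refine ⟨⟨p, q, (hagree p (fun hpS => hxp (hS p hpS)) q).mp hpq, ?_⟩, fun a haS h => ?_⟩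
    · exact ConnectedComponent.eq.mpr
        ((reachable_iff_of_agree_off hagree hS (hfar c hc)).mpr hcp).symm
    · have hca := (reachable_iff_of_agree_off hagree hS (hfar c hc)).mp
        (ConnectedComponent.eq.mp h.symm)
      exact hfar c hc ((hS a haS).trans hca.symm)
  · intro c₁ hc₁ c₂ _ h
    rw [← hrep c₁, ← hrep c₂]
    exact ConnectedComponent.eq.mpr
      ((reachable_iff_of_agree_off hagree hS (hfar c₁ hc₁)).mp (ConnectedComponent.eq.mp h))

theorem ntComps_lt_of_agree_off [Finite α] (hagree : ∀ a ∉ S, ∀ b, G'.Adj a b ↔ G.Adj a b)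
    (hS : ∀ a ∈ S, G'.Reachable x a) {a₁ a₂ : α} (h₁ : a₁ ∈ S) (h₂ : a₂ ∈ S)
    (h₁₂ : ¬ G.Reachable a₁ a₂) (hnt₁ : NontrivComp G (G.connectedComponentMk a₁))
    (hnt₂ : NontrivComp G (G.connectedComponentMk a₂)) : ntComps G' < ntComps G := by
  set U := {c | NontrivComp G c ∧ ∀ a ∈ S, G.connectedComponentMk a ≠ c}
  have hD₂ : G.connectedComponentMk a₂ ∉ U := fun h => h.2 a₂ h₂ rfl
  have hD₁ : G.connectedComponentMk a₁ ∉ insert (G.connectedComponentMk a₂) U := by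
    rintro (h | h)
    · exact h₁₂ (ConnectedComponent.eq.mp h)
    · exact h.2 a₁ h₁ rfl
  have hsub : insert (G.connectedComponentMk a₁) (insert (G.connectedComponentMk a₂) U) ⊆
      {c | NontrivComp G c} := by
    rintro c (rfl | rfl | hc)
    exacts [hnt₁, hnt₂, hc.1]
  calc ntComps G' ≤ U.ncard + 1 := ntComps_le_of_agree_off hagree hS
    _ < U.ncard + 2 := by omega
    _ = (insert (G.connectedComponentMk a₁) (insert (G.connectedComponentMk a₂) U)).ncard := by
      rw [Set.ncard_insert_of_notMem hD₁, Set.ncard_insert_of_notMem hD₂]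
    _ ≤ ntComps G := Set.ncard_le_ncard hsub

end AgreeOff

theorem symmDiffEdges_adj_iff_of_forall_notMem (G : SimpleGraph α) {S : Set (Sym2 α)} {a : α}
    (ha : ∀ s ∈ S, a ∉ s) (b : α) : (symmDiffEdges G S).Adj a b ↔ G.Adj a b := by
  have hab : s(a, b) ∉ S := fun h => ha _ h (Sym2.mem_mk_left a b)
  simp only [symmDiffEdges, fromEdgeSet_adj, Set.mem_symmDiff, mem_edgeSet, hab,
    not_false_eq_true, and_true, false_and, or_false]
  exact ⟨And.left, fun h => ⟨h, h.ne⟩⟩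

theorem symmDiffEdges_adj_of_adj_of_notMem {G : SimpleGraph α} {S : Set (Sym2 α)} {a b : α}
    (hab : G.Adj a b) (hS : s(a, b) ∉ S) : (symmDiffEdges G S).Adj a b :=
  (fromEdgeSet_adj _).mpr ⟨Or.inl ⟨hab, hS⟩, hab.ne⟩

theorem symmDiffEdges_adj_of_mem_of_not_adj {G : SimpleGraph α} {S : Set (Sym2 α)} {a b : α}
    (hS : s(a, b) ∈ S) (hab : ¬ G.Adj a b) (hne : a ≠ b) : (symmDiffEdges G S).Adj a b :=
  (fromEdgeSet_adj _).mpr ⟨Or.inr ⟨hS, hab⟩, hne⟩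

variable {β γ : Type*} {G : SimpleGraph (β ⊕ γ)}

theorem eq_of_inr_mem_of_le_completeBipartiteGraph (hG : G ≤ completeBipartiteGraph β γ)
    {s : Sym2 (β ⊕ γ)} (hs : s ∈ G.edgeSet) {c d : γ} (hc : inr c ∈ s) (hd : inr d ∈ s) :
    c = d := by
  induction s using Sym2.ind with
  | _ p q =>
    have := hG hs
    rcases p with p | p <;> rcases q with q | q <;> simp_all

theorem Walk.IsCycle.exists_inr_ne_mem_support (hG : G ≤ completeBipartiteGraph β γ)
    {u : β ⊕ γ} {p : G.Walk u u} (hp : p.IsCycle) :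
    ∃ c₁ c₂, c₁ ≠ c₂ ∧ inr c₁ ∈ p.support ∧ inr c₂ ∈ p.support := by
  have hlen := hp.three_le_length
  have side (i : ℕ) (hi : i < p.length) := hG (p.adj_getVert_succ hi)
  have mem (i : ℕ) : p.getVert i ∈ p.support := p.getVert_mem_support i
  have ne (i j : ℕ) (hi : 1 ≤ i ∧ i ≤ p.length) (hj : 1 ≤ j ∧ j ≤ p.length)
      (hij : i ≠ j) :
      p.getVert i ≠ p.getVert j := fun h => hij (hp.getVert_injOn hi hj h)
  rcases h₁ : p.getVert 1 with b₁ | c₁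
  · rcases h₀ : p.getVert 0 with b₀ | c₀
    · have := side 0 (by omega); simp_all
    rcases h₂ : p.getVert 2 with b₂ | c₂
    · have := side 1 (by omega); simp_all
    have h₀' : p.getVert p.length = inr c₀ := by rw [p.getVert_length, ← h₀, p.getVert_zero]
    refine ⟨c₀, c₂, fun h => ne p.length 2 (by omega) (by omega) (by omega) ?_,
      h₀ ▸ mem 0, h₂ ▸ mem 2⟩
    rw [h₀', h₂, h]
  · rcases h₂ : p.getVert 2 with b₂ | c₂
    · rcases h₃ : p.getVert 3 with b₃ | c₃
      · have := side 2 (by omega); simp_all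
      refine ⟨c₁, c₃, fun h => ne 1 3 (by omega) (by omega) (by omega) ?_,
        h₁ ▸ mem 1, h₃ ▸ mem 3⟩
      rw [h₁, h₃, h]
    · have := side 1 (by omega); simp_all

end SimpleGraph

namespace HGraphE

variable {H : HGraphE}

namespace Walk

variable (W : H.Walk) (hk : 0 < W.k)

def idxMod (j : ℕ) : Fin W.k := ⟨j % W.k, Nat.mod_lt j hk⟩

/-- The closed walk `v₀ e₀ v₁ e₁ …` of `W` in the incidence graph, unrolled periodically:
position `2j` holds the anchor `v_{j mod k}` and position `2j + 1` the edge `e_{j mod k}`. -/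
def incSeq (t : ℕ) : H.V ⊕ H.E :=
  if t % 2 = 0 then inl (W.vtx (W.idxMod hk (t / 2)).castSucc)
  else inr (W.edge (W.idxMod hk (t / 2)))

variable {W}

theorem idxMod_val (i : Fin W.k) : W.idxMod hk i = i := Fin.ext (Nat.mod_eq_of_lt i.isLt)

theorem incSeq_two_mul (j : ℕ) : W.incSeq hk (2 * j) = inl (W.vtx (W.idxMod hk j).castSucc) := by
  simp [incSeq]

theorem incSeq_two_mul_add_one (j : ℕ) :
    W.incSeq hk (2 * j + 1) = inr (W.edge (W.idxMod hk j)) := by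
  simp [incSeq, Nat.add_mod, Nat.add_div]

theorem incSeq_periodic : Function.Periodic (W.incSeq hk) (2 * W.k) := by
  intro t
  have hmod : (t / 2 + W.k) % W.k = t / 2 % W.k := Nat.add_mod_right _ _
  simp [incSeq, idxMod, Nat.add_mul_div_left t W.k two_pos, hmod]

theorem IsClosed.incSeq_two_mul_add_two (hW : W.IsClosed) (j : ℕ) :
    W.incSeq hk (2 * j + 2) = inl (W.vtx (W.idxMod hk j).succ) := by
  rw [show 2 * j + 2 = 2 * (j + 1) by ring, incSeq_two_mul, inl.injEq]
  have hlt := Nat.mod_lt j hk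
  have h1 : 1 % W.k = 1 := Nat.mod_eq_of_lt (by have := hW.2; omega)
  by_cases hj : j % W.k + 1 = W.k
  · have h0 : W.idxMod hk (j + 1) = ⟨0, hk⟩ := by
      simp only [idxMod, Nat.add_mod_eq_ite, h1, hj, le_refl, if_true, Nat.sub_self]
    have hlast : (W.idxMod hk j).succ = Fin.last W.k := Fin.ext (by simpa [idxMod] using hj)
    rw [h0, hlast, ← hW.1]
    rfl
  · congr 1
    ext
    simp only [idxMod, Fin.val_castSucc, Fin.val_succ, Nat.add_mod_eq_ite, h1]
    rw [if_neg (by omega)]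

theorem incSeq_adj {F : Set H.Walk} (hWF : W ∈ F) (hW : W.IsClosed) (t : ℕ) :
    (H.eulerSubgraph F).Adj (W.incSeq hk t) (W.incSeq hk (t + 1)) := by
  obtain ⟨j, rfl | rfl⟩ := Nat.even_or_odd' t
  · rw [incSeq_two_mul, incSeq_two_mul_add_one]
    exact Or.inl ⟨_, _, rfl, rfl, W, hWF, _, rfl, Or.inl rfl⟩
  · rw [incSeq_two_mul_add_one, hW.incSeq_two_mul_add_two]
    exact Or.inr ⟨_, _, rfl, rfl, W, hWF, _, rfl, Or.inr rfl⟩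

theorem incSeq_reachable {F : Set H.Walk} (hWF : W ∈ F) (hW : W.IsClosed) (t r : ℕ) :
    (H.eulerSubgraph F).Reachable (W.incSeq hk t) (W.incSeq hk r) :=
  have from_zero (n : ℕ) := reachable_of_forall_adj_succ (Nat.zero_le n)
    fun t _ _ => incSeq_adj hk hWF hW t
  (from_zero t).symm.trans (from_zero r)

theorem IsTrail.modEq_of_incSeq_edge_eq (htr : W.IsTrail) (hW : W.IsClosed) {t r : ℕ}
    (h : s(W.incSeq hk t, W.incSeq hk (t + 1)) = s(W.incSeq hk r, W.incSeq hk (r + 1))) :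
    t ≡ r [MOD 2 * W.k] := by
  obtain ⟨j, rfl | rfl⟩ := Nat.even_or_odd' t <;>
    obtain ⟨l, rfl | rfl⟩ := Nat.even_or_odd' r <;>
    simp only [incSeq_two_mul, incSeq_two_mul_add_one, hW.incSeq_two_mul_add_two,
      Sym2.eq_iff, inl.injEq, inr.injEq, reduceCtorEq, and_false, or_false,
      false_or] at h
  · exact (Nat.ModEq.mul_left' 2 (Fin.mk.inj_iff.mp (htr h.2))).add_right 0
  · rw [htr h.2] at h
    exact (W.ne _ h.1).elim
  · rw [htr h.1] at h
    exact (W.ne _ h.2.symm).elim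
  · exact (Nat.ModEq.mul_left' 2 (Fin.mk.inj_iff.mp (htr h.1))).add_right 1

theorem exists_incSeq_edge_eq (i : Fin W.k) {v : H.V}
    (hv : W.vtx i.castSucc = v ∨ W.vtx i.succ = v) (hW : W.IsClosed) :
    ∃ r, s(W.incSeq hk r, W.incSeq hk (r + 1)) = s(inl v, inr (W.edge i)) := by
  rcases hv with rfl | rfl
  · exact ⟨2 * i, by rw [incSeq_two_mul, incSeq_two_mul_add_one, idxMod_val]⟩
  · exact ⟨2 * i + 1, by rw [incSeq_two_mul_add_one, hW.incSeq_two_mul_add_two, idxMod_val,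
      Sym2.eq_swap]⟩

end Walk

variable {F : Set H.Walk}

theorem ConsecIn.mem {v : H.V} {e : H.E} (h : H.ConsecIn F v e) : v ∈ H.mem e := by
  obtain ⟨W, -, i, rfl, rfl | rfl⟩ := h
  exacts [W.mem_left i, W.mem_right i]

theorem eulerSubgraph_le_incidenceGraph : H.eulerSubgraph F ≤ H.incidenceGraph := by
  rintro a b (⟨v, e, rfl, rfl, h⟩ | ⟨v, e, rfl, rfl, h⟩)
  exacts [Or.inl ⟨v, e, rfl, rfl, h.mem⟩, Or.inr ⟨v, e, rfl, rfl, h.mem⟩]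

theorem incidenceGraph_le_completeBipartiteGraph :
    H.incidenceGraph ≤ completeBipartiteGraph H.V H.E := by
  rintro a b (⟨v, e, rfl, rfl, -⟩ | ⟨v, e, rfl, rfl, -⟩) <;> simp

theorem exists_consecIn_of_adj {a b : H.V ⊕ H.E} (h : (H.eulerSubgraph F).Adj a b) :
    ∃ v e, s(a, b) = s(inl v, inr e) ∧ H.ConsecIn F v e := by
  rcases h with ⟨v, e, rfl, rfl, h⟩ | ⟨v, e, rfl, rfl, h⟩
  exacts [⟨v, e, rfl, h⟩, ⟨v, e, Sym2.eq_swap, h⟩]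

/-- The trail through an edge of `G_F` returns to it the other way round; by `hS`, none of its
other steps is in `S`, so they all survive in `G_F Δ S`. -/
theorem reachable_symmDiffEdges_of_mem (hF : ∀ W ∈ F, W.IsClosedTrail)
    {S : Set (Sym2 (H.V ⊕ H.E))}
    (hS : ∀ s ∈ S, s ∈ (H.eulerSubgraph F).edgeSet →
      ∀ t ∈ S, t ∈ (H.eulerSubgraph F).edgeSet →
      (∃ a b, a ∈ s ∧ b ∈ t ∧ (H.eulerSubgraph F).Reachable a b) → s = t)
    {a b : H.V ⊕ H.E} (hab : s(a, b) ∈ S) (hGF : (H.eulerSubgraph F).Adj a b) :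
    (symmDiffEdges (H.eulerSubgraph F) S).Reachable a b := by
  obtain ⟨v, e, hs, W, hWF, i, rfl, hv⟩ := exists_consecIn_of_adj hGF
  obtain ⟨htr, hW⟩ := hF W hWF
  have hk : 0 < W.k := by have := hW.2; omega
  obtain ⟨r, hr⟩ := W.exists_incSeq_edge_eq hk i hv hW
  rw [← hs] at hr
  have hround :
      (symmDiffEdges (H.eulerSubgraph F) S).Reachable (W.incSeq hk (r + 1)) (W.incSeq hk r) := by
    refine reachable_of_periodic (W.incSeq_periodic hk) (by omega) fun t ht => ?_
    have hadj := Walk.incSeq_adj hk hWF hW t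
    refine symmDiffEdges_adj_of_adj_of_notMem hadj fun htS => ht ?_
    refine htr.modEq_of_incSeq_edge_eq hk hW ?_
    rw [hr]
    exact hS _ htS hadj _ hab hGF ⟨_, _, Sym2.mem_mk_left _ _, hr ▸ Sym2.mem_mk_left _ _,
      Walk.incSeq_reachable hk hWF hW t r⟩
  rcases Sym2.eq_iff.mp hr with ⟨rfl, rfl⟩ | ⟨rfl, rfl⟩
  exacts [hround.symm, hround]

end HGraphE

/-- Corollary 4.8: if the `G_F`-edges of an `F`-interchanging cycle `C` lie in
pairwise distinct connected components of `G_F`, then `C` is `F`-diminishing. -/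
theorem interchanging_distinct_components_diminishing (H : HGraphE)
    (F : Set H.Walk) (hF : H.IsEulerFamily F) {x : H.V ⊕ H.E}
    (C : (H.incidenceGraph).Walk x x) (hC : IsInterchanging H F C)
    (hdist : ∀ s ∈ C.edges, s ∈ (H.eulerSubgraph F).edgeSet →
      ∀ t ∈ C.edges, t ∈ (H.eulerSubgraph F).edgeSet →
      (∃ a b, a ∈ s ∧ b ∈ t ∧ (H.eulerSubgraph F).Reachable a b) → s = t) :
    IsDiminishing H F C := by
  set G := H.eulerSubgraph F
  set G' := symmDiffEdges G {s | s ∈ C.edges}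
  have hagree : ∀ a ∉ {y | y ∈ C.support}, ∀ b, G'.Adj a b ↔ G.Adj a b := fun a ha =>
    symmDiffEdges_adj_iff_of_forall_notMem G fun s hs has =>
      ha (Walk.mem_support_of_mem_edges hs has)
  have hconn : ∀ y ∈ C.support, G'.Reachable x y := fun y => C.reachable_of_mem_support
    fun a b hab => if hGab : G.Adj a b
      then HGraphE.reachable_symmDiffEdges_of_mem hF.1 hdist hab hGab
      else (symmDiffEdges_adj_of_mem_of_not_adj hab hGab (C.adj_of_mem_edges hab).ne).reachable
  obtain ⟨e₁, e₂, hne, he₁, he₂⟩ :=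
    hC.1.exists_inr_ne_mem_support HGraphE.incidenceGraph_le_completeBipartiteGraph
  obtain ⟨s₁, ⟨hs₁C, hs₁e, hs₁G⟩, -⟩ := hC.2 e₁ he₁
  obtain ⟨s₂, ⟨hs₂C, hs₂e, hs₂G⟩, -⟩ := hC.2 e₂ he₂
  refine ⟨hC, ntComps_lt_of_agree_off hagree hconn he₁ he₂ (fun hreach => hne ?_)
    (nontrivComp_of_mem_edgeSet hs₁G hs₁e) (nontrivComp_of_mem_edgeSet hs₂G hs₂e)⟩
  have hs₁₂ := hdist s₁ hs₁C hs₁G s₂ hs₂C hs₂G ⟨_, _, hs₁e, hs₂e, hreach⟩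
  exact eq_of_inr_mem_of_le_completeBipartiteGraph
    (HGraphE.eulerSubgraph_le_incidenceGraph.trans
      HGraphE.incidenceGraph_le_completeBipartiteGraph)
    hs₁G hs₁e (hs₁₂ ▸ hs₂e)
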